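/- arXiv:2512.15854 — 11 statements merged into one kernel-verified Lean document; each statement's English description precedes it below -/
import Mathlib

section
/- Let d ≥ 1 and Ω ≥ 1 be natural numbers, and let μ be a probability measure on the space of Ω-tuples of vectors, Fin Ω → EuclideanSpace ℂ (Fin d), which is absolutely continuous with respect to the Lebesgue (volume) measure on that space. Then for μ-almost every tuple v, the rank of the Ω × Ω Gram matrix G with entries G i j = ⟪v i, v j⟫ equals min Ω d. -/
open MeasureTheory

noncomputable instance (d : ℕ) : MeasurableSpace (EuclideanSpace ℂ (Fin d)) := borel _

instance (d : ℕ) : BorelSpace (EuclideanSpace ℂ (Fin d)) := ⟨rfl⟩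

/-- The Gram matrix of a tuple of vectors in a complex inner product space. -/
noncomputable def gramMatrix {d Ω : ℕ} (v : Fin Ω → EuclideanSpace ℂ (Fin d)) :
    Matrix (Fin Ω) (Fin Ω) ℂ :=
  Matrix.of fun i j => (inner ℂ (v i) (v j) : ℂ)

/-!
The Gram matrix is `Aᴴ A` where the columns of `A` are the vectors, so its rank is the dimension
of their span, and it suffices that almost every tuple spans a space of dimension `min Ω d`.
For a tuple of at most `d` vectors this is linear independence, which holds almost everywhere by
induction on the number of vectors: given linearly independent `w`, a new vector only fails if it
lies in the proper subspace `span w`, which is Haar-null, and Fubini does the rest. In general one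
applies this to `min Ω d` of the coordinates; restricting coordinates is quasi-measure-preserving
for product measures.
-/

open Module Submodule Set

open scoped ComplexOrder in
theorem Matrix.rank_gram {𝕜 E n : Type*} [RCLike 𝕜] [NormedAddCommGroup E]
    [InnerProductSpace 𝕜 E] [FiniteDimensional 𝕜 E] [Fintype n] (v : n → E) :
    (Matrix.gram 𝕜 v).rank = finrank 𝕜 (span 𝕜 (range v)) := by
  let b := stdOrthonormalBasis 𝕜 E
  let e : E ≃ₗ[𝕜] (Fin (finrank 𝕜 E) → 𝕜) :=
    b.repr.toLinearEquiv.trans (WithLp.linearEquiv 2 𝕜 _)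
  rw [Matrix.gram_eq_conjTranspose_mul b, Matrix.rank_conjTranspose_mul_self,
    Matrix.rank_eq_finrank_span_cols, ← e.finrank_map_eq, Submodule.map_span, ← Set.range_comp]
  rfl

theorem Submodule.span_range_ne_top_of_card_lt {K V ι : Type*} [DivisionRing K] [AddCommGroup V]
    [Module K V] [Fintype ι] {v : ι → V} (h : Fintype.card ι < finrank K V) :
    span K (range v) ≠ ⊤ := by
  intro htop
  have := finrank_range_le_card (R := K) v
  rw [Set.finrank, htop, finrank_top] at this
  omega

theorem MeasureTheory.quasiMeasurePreserving_finset_restrict_pi {ι : Type*} [Fintype ι]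
    {α : ι → Type*} [∀ i, MeasurableSpace (α i)] (μ : ∀ i, Measure (α i))
    [∀ i, SigmaFinite (μ i)] (s : Finset ι) :
    Measure.QuasiMeasurePreserving (fun v : ∀ i, α i => fun i : s => v i) (Measure.pi μ)
      (Measure.pi fun i : s => μ i) := by
  classical
  -- `convert` reconciles the `Fintype` instances of `s` and of `{i // i ∈ s}`.
  convert Measure.quasiMeasurePreserving_fst.comp
    (measurePreserving_piEquivPiSubtypeProd μ (· ∈ s)).quasiMeasurePreserving
  rfl

section

variable {𝕜 E : Type*} [RCLike 𝕜] [NormedAddCommGroup E] [NormedSpace 𝕜 E] [NormedSpace ℝ E]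
  [IsScalarTower ℝ 𝕜 E] [FiniteDimensional 𝕜 E] [MeasurableSpace E] [BorelSpace E]

theorem Submodule.addHaar_eq_zero_of_ne_top (μ : Measure E) [μ.IsAddHaarMeasure]
    {s : Submodule 𝕜 E} (hs : s ≠ ⊤) : μ s = 0 :=
  haveI : FiniteDimensional ℝ E := .trans ℝ 𝕜 E
  Measure.addHaar_submodule μ (s.restrictScalars ℝ) (by rwa [Ne, restrictScalars_eq_top_iff])

theorem ae_linearIndependent_of_card_le (μ : Measure E) [μ.IsAddHaarMeasure]
    (ι : Type*) [Fintype ι] (h : Fintype.card ι ≤ finrank 𝕜 E) :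
    ∀ᵐ v ∂(Measure.pi fun _ : ι => μ), LinearIndependent 𝕜 v := by
  have : ProperSpace E := FiniteDimensional.proper_rclike 𝕜 E
  revert h
  refine Fintype.induction_empty_option (P := fun ι _ => Fintype.card ι ≤ finrank 𝕜 E →
    ∀ᵐ v ∂(Measure.pi fun _ : ι => μ), LinearIndependent 𝕜 v) ?_ ?_ ?_ ι
  · intro α β _ e ih h
    let := Fintype.ofEquiv β e.symm
    have he := measurePreserving_piCongrLeft (fun _ : α => μ) e.symm
    filter_upwards [he.quasiMeasurePreserving.ae (ih (by simpa [Fintype.card_congr e] using h))]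
      with v hv
    rw [← linearIndependent_equiv e]
    convert hv using 1
    ext
    simp [MeasurableEquiv.coe_piCongrLeft, Equiv.piCongrLeft_apply_eq_cast]
  · simp
  · intro α _ ih h
    rw [Fintype.card_option] at h
    let e := MeasurableEquiv.piOptionEquivProd (fun _ : Option α => E)
    have he : MeasurePreserving e (Measure.pi fun _ => μ) ((Measure.pi fun _ => μ).prod μ) :=
      MeasurePreserving.symm e.symm
        ⟨e.symm.measurable, Measure.pi_map_piOptionEquivProd fun _ : Option α => μ⟩
    have hmeas : MeasurableSet {z | LinearIndependent 𝕜 (e.symm z)} :=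
      e.symm.measurable isOpen_setOfPred_linearIndependent.measurableSet
    refine (he.quasiMeasurePreserving.ae ((Measure.ae_prod_iff_ae_ae hmeas).2 ?_)).mono
      fun v hv => by simpa using hv
    filter_upwards [ih (by omega)] with w hw
    filter_upwards [measure_eq_zero_iff_ae_notMem.1
      (addHaar_eq_zero_of_ne_top μ (span_range_ne_top_of_card_lt (K := 𝕜) (v := w) (by omega)))]
      with x hx
    exact linearIndependent_option.2 ⟨hw, hx⟩

theorem ae_finrank_span_range_eq_min (μ : Measure E) [μ.IsAddHaarMeasure]
    (ι : Type*) [Fintype ι] :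
    ∀ᵐ v ∂(Measure.pi fun _ : ι => μ),
      finrank 𝕜 (span 𝕜 (range v)) = min (Fintype.card ι) (finrank 𝕜 E) := by
  classical
  have : ProperSpace E := FiniteDimensional.proper_rclike 𝕜 E
  obtain ⟨s, -, hs⟩ := Finset.exists_subset_card_eq (s := (Finset.univ : Finset ι))
    (n := min (Fintype.card ι) (finrank 𝕜 E)) (by simp)
  filter_upwards [(quasiMeasurePreserving_finset_restrict_pi _ s).ae
    (ae_linearIndependent_of_card_le (𝕜 := 𝕜) μ s (by simp [hs]))] with v hv
  refine le_antisymm (le_min (finrank_range_le_card v) (Submodule.finrank_le _)) ?_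
  calc min (Fintype.card ι) (finrank 𝕜 E) = finrank 𝕜 (span 𝕜 (range fun i : s => v i)) := by
        rw [finrank_span_eq_card hv, Fintype.card_coe, hs]
    _ ≤ finrank 𝕜 (span 𝕜 (range v)) :=
        Submodule.finrank_mono (span_mono (range_comp_subset_range _ _))

end

theorem gram_rank_ae_min_general (d Ω : ℕ)
    (μ : Measure (Fin Ω → EuclideanSpace ℂ (Fin d)))
    (hμ : μ ≪ (volume : Measure (Fin Ω → EuclideanSpace ℂ (Fin d)))) :
    ∀ᵐ v ∂μ, (gramMatrix v).rank = min Ω d := by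
  filter_upwards [hμ.ae_le (ae_finrank_span_range_eq_min (𝕜 := ℂ) volume (Fin Ω))] with v hv
  change (Matrix.gram ℂ v).rank = min Ω d
  rw [Matrix.rank_gram, hv, Fintype.card_fin, finrank_euclideanSpace_fin]

theorem gram_rank_ae_min (d Ω : ℕ) (hd : 1 ≤ d) (hΩ : 1 ≤ Ω)
    (μ : Measure (Fin Ω → EuclideanSpace ℂ (Fin d))) [IsProbabilityMeasure μ]
    (hμ : μ ≪ (volume : Measure (Fin Ω → EuclideanSpace ℂ (Fin d)))) :
    ∀ᵐ v ∂μ, (gramMatrix v).rank = min Ω d :=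
  gram_rank_ae_min_general d Ω μ hμ
end

section
/- Fix a natural number d ≥ 1 and let P be the complex matrix indexed by Fin d × Fin d with entries P (a,b) (c,e) = 1/d if a = b and c = e, and 0 otherwise (the orthogonal projection onto the maximally entangled vector). For every real number y and every natural number n ≥ 1, the matrix ρ = ((1 − y)/d²) • 1 + y • P satisfies Matrix.trace (ρ ^ n) = ((1 + y·(d² − 1))^n + (d² − 1)·(1 − y)^n) / d^{2n}. -/
/-- The orthogonal projection onto the maximally entangled vector,
`P (a,b) (c,e) = 1/d` if `a = b` and `c = e`, and `0` otherwise. -/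
noncomputable def maxEntProj (d : ℕ) : Matrix (Fin d × Fin d) (Fin d × Fin d) ℂ :=
  Matrix.of fun ab ce => if ab.1 = ab.2 ∧ ce.1 = ce.2 then (1 / d : ℂ) else 0

/-!
`P` is idempotent, so `a • 1 + c • P` acts as `a` on `ker P` and as `a + c` on the line `range P`;
hence `(a • 1 + c • P) ^ n = a ^ n • 1 + ((a + c) ^ n - a ^ n) • P`. Taking traces with
`tr 1 = d²` and `tr P = 1` gives the eigenvalue `(1 + y (d² - 1)) / d²` once and `(1 - y) / d²`
with multiplicity `d² - 1`.
-/

open Matrix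

theorem IsIdempotentElem.smul_one_add_smul_pow {R A : Type*} [CommRing R] [Ring A] [Algebra R A]
    {p : A} (hp : IsIdempotentElem p) (a c : R) (n : ℕ) :
    (a • (1 : A) + c • p) ^ n = a ^ n • (1 : A) + ((a + c) ^ n - a ^ n) • p := by
  induction n with
  | zero => simp
  | succ n ih =>
    rw [pow_succ, ih]
    simp only [add_mul, mul_add, smul_mul_smul_comm, one_mul, mul_one, hp.eq]
    module

/-- The unnormalised maximally entangled vector `∑ₐ |a a⟩`. -/
def maxEntVec (d : ℕ) : Fin d × Fin d → ℂ := fun ab => if ab.1 = ab.2 then 1 else 0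

lemma maxEntVec_dotProduct_self (d : ℕ) : maxEntVec d ⬝ᵥ maxEntVec d = d := by
  simp [dotProduct, maxEntVec, Fintype.sum_prod_type]

lemma maxEntProj_eq_smul_vecMulVec (d : ℕ) :
    maxEntProj d = (d : ℂ)⁻¹ • vecMulVec (maxEntVec d) (maxEntVec d) := by
  ext ab ce
  by_cases h₁ : ab.1 = ab.2 <;> by_cases h₂ : ce.1 = ce.2 <;>
    simp [maxEntProj, maxEntVec, vecMulVec_apply, h₁, h₂]

lemma isIdempotentElem_maxEntProj (d : ℕ) : IsIdempotentElem (maxEntProj d) := by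
  rw [IsIdempotentElem, maxEntProj_eq_smul_vecMulVec, smul_mul_smul_comm, vecMulVec_mul_vecMulVec,
    maxEntVec_dotProduct_self, vecMulVec_smul, smul_smul]
  congr 1
  rcases eq_or_ne (d : ℂ) 0 with hd | hd
  · simp [hd]
  · field_simp

lemma trace_maxEntProj {d : ℕ} (hd : d ≠ 0) : trace (maxEntProj d) = 1 := by
  rw [maxEntProj_eq_smul_vecMulVec, trace_smul, trace_vecMulVec, maxEntVec_dotProduct_self,
    smul_eq_mul, inv_mul_cancel₀ (Nat.cast_ne_zero.mpr hd)]

theorem trace_pow_brownian_GUE_state_general (d : ℕ) (hd : 1 ≤ d) (y : ℝ) (n : ℕ) :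
    Matrix.trace
        (((((1 : ℂ) - (y : ℂ)) / (d : ℂ) ^ 2) • (1 : Matrix (Fin d × Fin d) (Fin d × Fin d) ℂ)
            + (y : ℂ) • maxEntProj d) ^ n)
      = ((1 + (y : ℂ) * ((d : ℂ) ^ 2 - 1)) ^ n
          + ((d : ℂ) ^ 2 - 1) * (1 - (y : ℂ)) ^ n) / (d : ℂ) ^ (2 * n) := by
  have hd₀ : (d : ℂ) ≠ 0 := Nat.cast_ne_zero.mpr (by omega)
  rw [(isIdempotentElem_maxEntProj d).smul_one_add_smul_pow, trace_add, trace_smul, trace_smul,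
    trace_one, trace_maxEntProj (by omega), Fintype.card_prod, Fintype.card_fin]
  have hsum : (1 - (y : ℂ)) / (d : ℂ) ^ 2 + y = (1 + y * ((d : ℂ) ^ 2 - 1)) / (d : ℂ) ^ 2 := by
    field_simp
    ring
  rw [hsum, div_pow, div_pow, ← pow_mul, smul_eq_mul, smul_eq_mul, Nat.cast_mul]
  field_simp
  ring

theorem trace_pow_brownian_GUE_state (d : ℕ) (hd : 1 ≤ d) (y : ℝ) (n : ℕ) (hn : 1 ≤ n) :
    Matrix.trace
        (((((1 : ℂ) - (y : ℂ)) / (d : ℂ) ^ 2) • (1 : Matrix (Fin d × Fin d) (Fin d × Fin d) ℂ)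
            + (y : ℂ) • maxEntProj d) ^ n)
      = ((1 + (y : ℂ) * ((d : ℂ) ^ 2 - 1)) ^ n
          + ((d : ℂ) ^ 2 - 1) * (1 - (y : ℂ)) ^ n) / (d : ℂ) ^ (2 * n) :=
  trace_pow_brownian_GUE_state_general d hd y n
end

section
/- Fix d ≥ 1. For i : Fin d let D i = stdBasisMatrix i i 1 ∈ Matrix (Fin d) (Fin d) ℂ; for i < j let S i j = (1/√2) • (stdBasisMatrix i j 1 + stdBasisMatrix j i 1) and A i j = (Complex.I/√2) • (stdBasisMatrix i j 1 − stdBasisMatrix j i 1). Let conj(X) denote entrywise complex conjugation of X, ⊗ the Kronecker product, and let P be the matrix indexed by Fin d × Fin d with P (a,b) (c,e) = 1/d if a = b and c = e, and 0 otherwise. Then Σ_{i} (D i ⊗ 1 − 1 ⊗ conj (D i))² + Σ_{i < j} ((S i j ⊗ 1 − 1 ⊗ conj (S i j))² + (A i j ⊗ 1 − 1 ⊗ conj (A i j))²) = (2d) • (1 − P). -/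
open Matrix

/-- Diagonal element of the Hermitian basis of `d × d` matrices. -/
noncomputable def Dmat (d : ℕ) (i : Fin d) : Matrix (Fin d) (Fin d) ℂ :=
  Matrix.single i i 1

/-- Symmetric off-diagonal element of the Hermitian basis. -/
noncomputable def Smat (d : ℕ) (i j : Fin d) : Matrix (Fin d) (Fin d) ℂ :=
  ((1 : ℂ) / (Real.sqrt 2 : ℂ)) •
    (Matrix.single i j 1 + Matrix.single j i 1)

/-- Antisymmetric off-diagonal element of the Hermitian basis. -/
noncomputable def Amat (d : ℕ) (i j : Fin d) : Matrix (Fin d) (Fin d) ℂ :=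
  (Complex.I / (Real.sqrt 2 : ℂ)) •
    (Matrix.single i j 1 - Matrix.single j i 1)

/-- Entrywise complex conjugation of a matrix. -/
def conjMat {d : ℕ} (X : Matrix (Fin d) (Fin d) ℂ) : Matrix (Fin d) (Fin d) ℂ :=
  X.map (starRingEnd ℂ)

/-- The two-replica lift `X ⊗ 1 − 1 ⊗ conj X`. -/
noncomputable def replicaLift {d : ℕ} (X : Matrix (Fin d) (Fin d) ℂ) :
    Matrix (Fin d × Fin d) (Fin d × Fin d) ℂ :=
  Matrix.kroneckerMap (· * ·) X (1 : Matrix (Fin d) (Fin d) ℂ)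
    - Matrix.kroneckerMap (· * ·) (1 : Matrix (Fin d) (Fin d) ℂ) (conjMat X)

/-!
For Hermitian `X` we have `conj X = Xᵀ`, so the replica lift of `X` is `T X := X ⊗ 1 - 1 ⊗ Xᵀ`,
which, unlike `replicaLift`, is `ℂ`-linear in `X`. Expanding `S i j` and `A i j` in the matrix units
`E i j`, the two squares of a pair `i < j` add up to `T (E i j) T (E j i) + T (E j i) T (E i j)`
(the cross terms of `(u + v)² - (u - v)²`), so the whole sum is `∑ i j, T (E i j) T (E j i)`.
Multiplying out gives `2d • 1 - 2 ∑ i j, E i j ⊗ E i j`, and the last sum is `d • P`.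
-/

open Finset Kronecker

theorem Finset.sum_diag_add_sum_sum_Ioi {α M : Type*} [LinearOrder α] [Fintype α]
    [LocallyFiniteOrderTop α] [LocallyFiniteOrderBot α] [AddCommMonoid M] (f : α → α → M) :
    ∑ i, f i i + ∑ i, ∑ j ∈ Ioi i, (f i j + f j i) = ∑ i, ∑ j, f i j := by
  rw [sum_sum_Ioi_add_eq_sum_sum_off_diag (fun i j => f j i), ← sum_add_distrib]
  exact sum_congr rfl fun i _ => (Fintype.sum_eq_add_sum_compl i (f i)).symm

namespace Matrix

variable {R : Type*} {l m n p : Type*}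

theorem sum_kronecker [CommSemiring R] {ι : Type*} (s : Finset ι) (A : ι → Matrix l m R)
    (B : Matrix n p R) : (∑ i ∈ s, A i) ⊗ₖ B = ∑ i ∈ s, A i ⊗ₖ B :=
  map_sum ((kroneckerBilinear (R := R)).flip B) A s

theorem kronecker_sum [CommSemiring R] {ι : Type*} (s : Finset ι) (A : Matrix l m R)
    (B : ι → Matrix n p R) : A ⊗ₖ (∑ i ∈ s, B i) = ∑ i ∈ s, A ⊗ₖ B i :=
  map_sum (kroneckerBilinear (R := R) A) B s

variable [CommRing R] [DecidableEq n]

/-- The matrix of `M ↦ X * M - M * X` acting on row-major vectorisations of `M`. -/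
def kroneckerAd : Matrix n n R →ₗ[R] Matrix (n × n) (n × n) R where
  toFun X := X ⊗ₖ 1 - 1 ⊗ₖ Xᵀ
  map_add' X Y := by
    rw [transpose_add, add_kronecker, kronecker_add]
    abel
  map_smul' c X := by
    rw [transpose_smul, smul_kronecker, kronecker_smul, RingHom.id_apply, smul_sub]

theorem kroneckerAd_apply (X : Matrix n n R) : kroneckerAd X = X ⊗ₖ 1 - 1 ⊗ₖ Xᵀ := rfl

variable [Fintype n]

theorem kroneckerAd_mul_kroneckerAd (X Y : Matrix n n R) :
    kroneckerAd X * kroneckerAd Y =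
      (X * Y) ⊗ₖ 1 + 1 ⊗ₖ (Y * X)ᵀ - X ⊗ₖ Yᵀ - Y ⊗ₖ Xᵀ := by
  simp only [kroneckerAd_apply, sub_mul, mul_sub, ← mul_kronecker_mul, Matrix.one_mul,
    Matrix.mul_one, transpose_mul]
  abel

theorem sum_kroneckerAd_single_mul_kroneckerAd_single :
    ∑ i : n, ∑ j : n, kroneckerAd (single i j (1 : R)) * kroneckerAd (single j i 1) =
      (2 * Fintype.card n : R) • 1 - (2 : R) • ∑ i : n, ∑ j : n, single i j 1 ⊗ₖ single i j 1 := by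
  have sum_single_kronecker_one : ∑ i : n, single i i (1 : R) ⊗ₖ (1 : Matrix n n R) = 1 := by
    rw [← sum_kronecker, sum_single_one, one_kronecker_one]
  have sum_one_kronecker_single : ∑ i : n, (1 : Matrix n n R) ⊗ₖ single i i (1 : R) = 1 := by
    rw [← kronecker_sum, sum_single_one, one_kronecker_one]
  simp only [kroneckerAd_mul_kroneckerAd, single_mul_single_same, transpose_single, mul_one,
    sum_sub_distrib, sum_add_distrib, sum_const, card_univ, ← smul_sum,
    sum_single_kronecker_one, sum_one_kronecker_single]
  rw [sum_comm (s := univ) (t := univ) (f := fun i j => single j i (1 : R) ⊗ₖ single j i 1)]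
  simp only [← Nat.cast_smul_eq_nsmul R]
  module

end Matrix

open Matrix

section HermitianBasis

variable {d : ℕ}

theorem conjMat_eq_transpose_of_isHermitian {X : Matrix (Fin d) (Fin d) ℂ} (hX : X.IsHermitian) :
    conjMat X = Xᵀ := by
  ext i j
  exact congr_fun (congr_fun hX j) i

theorem replicaLift_eq_kroneckerAd {X : Matrix (Fin d) (Fin d) ℂ} (hX : X.IsHermitian) :
    replicaLift X = kroneckerAd X := by
  rw [replicaLift, conjMat_eq_transpose_of_isHermitian hX, kroneckerAd_apply]

theorem isHermitian_Dmat (i : Fin d) : (Dmat d i).IsHermitian := by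
  simp [Dmat, IsHermitian]

theorem isHermitian_Smat (i j : Fin d) : (Smat d i j).IsHermitian := by
  simp [Smat, IsHermitian, add_comm]

theorem isHermitian_Amat (i j : Fin d) : (Amat d i j).IsHermitian := by
  simp [Amat, IsHermitian, neg_div, ← smul_neg]

theorem replicaLift_Dmat_sq (i : Fin d) :
    replicaLift (Dmat d i) ^ 2 = kroneckerAd (single i i 1) * kroneckerAd (single i i 1) := by
  rw [replicaLift_eq_kroneckerAd (isHermitian_Dmat i), sq, Dmat]

theorem replicaLift_Smat_sq_add_replicaLift_Amat_sq (i j : Fin d) :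
    replicaLift (Smat d i j) ^ 2 + replicaLift (Amat d i j) ^ 2 =
      kroneckerAd (single i j 1) * kroneckerAd (single j i 1) +
        kroneckerAd (single j i 1) * kroneckerAd (single i j 1) := by
  have sqrt_two_sq : ((Real.sqrt 2 : ℝ) : ℂ) ^ 2 = 2 := by
    rw [← Complex.ofReal_pow, Real.sq_sqrt zero_le_two, Complex.ofReal_ofNat]
  rw [replicaLift_eq_kroneckerAd (isHermitian_Smat i j),
    replicaLift_eq_kroneckerAd (isHermitian_Amat i j), Smat, Amat]
  simp only [map_smul, map_add, map_sub, smul_pow, div_pow, sqrt_two_sq, Complex.I_sq, one_pow]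
  simp only [sq, add_mul, mul_add, sub_mul, mul_sub]
  module

theorem sum_single_kronecker_single_eq_smul_maxEntProj :
    ∑ i : Fin d, ∑ j : Fin d, single i j (1 : ℂ) ⊗ₖ single i j 1 = (d : ℂ) • maxEntProj d := by
  ext ⟨a, b⟩ ⟨c, e⟩
  have hd : (d : ℂ) ≠ 0 := Nat.cast_ne_zero.mpr a.pos.ne'
  simp [maxEntProj, Matrix.sum_apply, single_apply, hd, ite_and, eq_comm]

end HermitianBasis

theorem brownian_GUE_effective_hamiltonian_general (d : ℕ) :
    (∑ i : Fin d, replicaLift (Dmat d i) ^ 2)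
      + ∑ i : Fin d, ∑ j ∈ Finset.Ioi i,
          (replicaLift (Smat d i j) ^ 2 + replicaLift (Amat d i j) ^ 2)
    = (2 * (d : ℂ)) •
        ((1 : Matrix (Fin d × Fin d) (Fin d × Fin d) ℂ) - maxEntProj d) := by
  simp only [replicaLift_Dmat_sq, replicaLift_Smat_sq_add_replicaLift_Amat_sq]
  rw [sum_diag_add_sum_sum_Ioi fun i j =>
      kroneckerAd (single i j (1 : ℂ)) * kroneckerAd (single j i 1),
    sum_kroneckerAd_single_mul_kroneckerAd_single, sum_single_kronecker_single_eq_smul_maxEntProj,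
    Fintype.card_fin]
  module

theorem brownian_GUE_effective_hamiltonian (d : ℕ) (hd : 1 ≤ d) :
    (∑ i : Fin d, replicaLift (Dmat d i) ^ 2)
      + ∑ i : Fin d, ∑ j ∈ Finset.Ioi i,
          (replicaLift (Smat d i j) ^ 2 + replicaLift (Amat d i j) ^ 2)
    = (2 * (d : ℂ)) •
        ((1 : Matrix (Fin d × Fin d) (Fin d × Fin d) ℂ) - maxEntProj d) :=
  brownian_GUE_effective_hamiltonian_general d
end

section
/- Let N be a natural number and let α, γ : Fin N → Fin 4 be Pauli words. Then the Pauli strings satisfy P α * P γ = (−1)^k • (P γ * P α), where k is the cardinality of the set {i : Fin N | α i ≠ 0 ∧ γ i ≠ 0 ∧ α i ≠ γ i} of sites where α and γ carry different non-identity Pauli matrices. -/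
/-- The identity and the three Pauli matrices. -/
noncomputable def pauli : Fin 4 → Matrix (Fin 2) (Fin 2) ℂ :=
  ![1, !![0, 1; 1, 0], !![0, -Complex.I; Complex.I, 0], !![1, 0; 0, -1]]

/-- The Pauli string associated to a word `α : Fin N → Fin 4`:
the `N`-fold Kronecker (tensor) product of the matrices `pauli (α i)`. -/
noncomputable def pauliString (N : ℕ) (α : Fin N → Fin 4) :
    Matrix (Fin N → Fin 2) (Fin N → Fin 2) ℂ :=
  Matrix.of fun r c => ∏ i, pauli (α i) (r i) (c i)

/-!
Kronecker products multiply factorwise, so the two products of Pauli strings differ by the product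
of the one-site commutation factors. Two of the matrices `pauli a`, `pauli b` commute when one
of them is the identity or `a = b`, and anticommute otherwise.
-/

namespace Matrix

variable {ι R : Type*} [Fintype ι] [CommSemiring R] {l m n : ι → Type*}

def piKronecker (A : ∀ i, Matrix (l i) (m i) R) : Matrix (∀ i, l i) (∀ i, m i) R :=
  of fun r c => ∏ i, A i (r i) (c i)

theorem piKronecker_mul [DecidableEq ι] [∀ i, Fintype (m i)] (A : ∀ i, Matrix (l i) (m i) R)
    (B : ∀ i, Matrix (m i) (n i) R) :
    piKronecker A * piKronecker B = piKronecker fun i => A i * B i := by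
  ext r c
  simp only [piKronecker, mul_apply, of_apply, Fintype.prod_sum, Finset.prod_mul_distrib]

theorem piKronecker_mul_eq_prod_smul [DecidableEq ι] [∀ i, Fintype (m i)]
    {A B : ∀ i, Matrix (m i) (m i) R} (s : ι → R)
    (h : ∀ i, A i * B i = s i • (B i * A i)) :
    piKronecker A * piKronecker B = (∏ i, s i) • (piKronecker B * piKronecker A) := by
  rw [piKronecker_mul, piKronecker_mul]
  ext r c
  simp only [piKronecker, h, smul_apply, of_apply, smul_eq_mul, Finset.prod_mul_distrib]

end Matrix

theorem pauliString_eq_piKronecker (N : ℕ) (α : Fin N → Fin 4) :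
    pauliString N α = Matrix.piKronecker fun i => pauli (α i) :=
  rfl

theorem pauli_mul_eq_smul_mul (a b : Fin 4) :
    pauli a * pauli b =
      (if a ≠ 0 ∧ b ≠ 0 ∧ a ≠ b then (-1 : ℂ) else 1) • (pauli b * pauli a) := by
  fin_cases a <;> fin_cases b <;> simp [pauli, Matrix.one_fin_two]

theorem pauliString_comm (N : ℕ) (α γ : Fin N → Fin 4) :
    pauliString N α * pauliString N γ =
      ((-1 : ℂ) ^
          (Finset.univ.filter fun i : Fin N =>
            α i ≠ 0 ∧ γ i ≠ 0 ∧ α i ≠ γ i).card) •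
        (pauliString N γ * pauliString N α) := by
  have sign_prod : ∏ i, (if α i ≠ 0 ∧ γ i ≠ 0 ∧ α i ≠ γ i then (-1 : ℂ) else 1) =
      (-1) ^ (Finset.univ.filter fun i => α i ≠ 0 ∧ γ i ≠ 0 ∧ α i ≠ γ i).card := by
    rw [Finset.prod_ite, Finset.prod_const, Finset.prod_const, one_pow, mul_one]
  rw [← sign_prod, pauliString_eq_piKronecker, pauliString_eq_piKronecker]
  exact Matrix.piKronecker_mul_eq_prod_smul _ fun i => pauli_mul_eq_smul_mul (α i) (γ i)
end

section
/- Let N, q : ℕ and let α : Fin N → Fin 4 be a Pauli word of weight s = |α|. Then Σ over all Pauli words γ : Fin N → Fin 4 of weight |γ| = q of the matrix (P α − P γ * P α * P γ) equals (Σ_{m = 0}^{q} (s.choose m) · ((N − s).choose (q − m)) · 3^{q − m} · (3^m − (−1)^m)) • P α. In particular every Pauli string P α is an eigenvector of the two-replica effective Hamiltonian superoperator A ↦ J Σ_{|γ| = q} (A − P γ * A * P γ) of the Brownian spin cluster, with eigenvalue E(s) = J Σ_{m=0}^{q} C(s,m) C(N−s, q−m) 3^{q−m} (3^m − (−1)^m)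 depending only on the weight s. -/
/-- The weight (length) of a Pauli word: the number of non-identity sites. -/
def pauliWeight (N : ℕ) (α : Fin N → Fin 4) : ℕ :=
  (Finset.univ.filter fun i : Fin N => α i ≠ 0).card

/-!
Conjugating one Pauli matrix by another gives `σ_b σ_a σ_b = ± σ_a`, with sign `-1` exactly
when `a` and `b` are distinct non-identity indices. Pauli strings are tensor products, so
`P γ * P α * P γ` is `P α` times the product of these site signs, and the left-hand side is
`(∑_{|γ| = q} (1 - sign(α, γ))) • P α`. Counting with the weight enumerator
`∑_γ sign(α, γ) X^|γ|`, which factorises over sites into `(1 - X)^s (1 + 3X)^(N - s)`,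
the scalar is the coefficient of `X^q` in `((1 + 3X)^s - (1 - X)^s) (1 + 3X)^(N - s)`.
-/

open Polynomial Finset

def kroneckerPi {ι m n R : Type*} [Fintype ι] [CommMonoid R] (A : ι → Matrix m n R) :
    Matrix (ι → m) (ι → n) R :=
  Matrix.of fun r c => ∏ i, A i (r i) (c i)

section kroneckerPi

variable {ι l m n R : Type*} [Fintype ι]

theorem kroneckerPi_mul [DecidableEq ι] [Fintype m] [CommSemiring R]
    (A : ι → Matrix l m R) (B : ι → Matrix m n R) :
    kroneckerPi A * kroneckerPi B = kroneckerPi fun i => A i * B i := by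
  ext r c
  simp only [kroneckerPi, Matrix.mul_apply, Matrix.of_apply, ← prod_mul_distrib]
  exact (Fintype.prod_sum fun i x => A i (r i) x * B i x (c i)).symm

theorem kroneckerPi_smul [CommMonoid R] (c : ι → R) (A : ι → Matrix m n R) :
    kroneckerPi (fun i => c i • A i) = (∏ i, c i) • kroneckerPi A := by
  ext r s
  simp [kroneckerPi, prod_mul_distrib]

end kroneckerPi

def pauliSign (a b : Fin 4) : ℤ := if a ≠ 0 ∧ b ≠ 0 ∧ a ≠ b then -1 else 1

theorem pauli_mul_pauli_mul_pauli (a b : Fin 4) :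
    pauli b * pauli a * pauli b = (pauliSign a b : ℂ) • pauli a := by
  fin_cases a <;> fin_cases b <;>
    · ext i j
      fin_cases i <;> fin_cases j <;>
        simp [pauli, pauliSign, Matrix.mul_apply, Fin.sum_univ_two]

theorem pauliString_mul_pauliString_mul_pauliString (N : ℕ) (α γ : Fin N → Fin 4) :
    pauliString N γ * pauliString N α * pauliString N γ
      = ((∏ i, pauliSign (α i) (γ i) : ℤ) : ℂ) • pauliString N α := by
  change kroneckerPi _ * kroneckerPi _ * kroneckerPi _ = _ • kroneckerPi _
  simp only [kroneckerPi_mul, pauli_mul_pauli_mul_pauli, kroneckerPi_smul, Int.cast_prod]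

section weightEnumerator

variable {N : ℕ}

theorem X_pow_pauliWeight {R : Type*} [CommSemiring R] (γ : Fin N → Fin 4) :
    (X : R[X]) ^ pauliWeight N γ = ∏ i, if γ i = 0 then 1 else X := by
  rw [prod_ite, prod_const_one, prod_const, one_mul]
  rfl

theorem sum_filter_pauliWeight_eq_coeff {R : Type*} [CommSemiring R]
    (f : (Fin N → Fin 4) → R) (q : ℕ) :
    ∑ γ with pauliWeight N γ = q, f γ = (∑ γ, C (f γ) * X ^ pauliWeight N γ).coeff q := by
  simp only [finsetSum_coeff, coeff_C_mul_X_pow, sum_filter, eq_comm]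

theorem pauliWeight_le (α : Fin N → Fin 4) : pauliWeight N α ≤ N :=
  (card_le_univ _).trans_eq (Fintype.card_fin N)

theorem card_filter_eq_zero_eq_sub_pauliWeight (α : Fin N → Fin 4) :
    #{i | α i = 0} = N - pauliWeight N α := by
  have := card_filter_add_card_filter_not (s := univ) (fun i : Fin N => α i = 0)
  rw [card_univ, Fintype.card_fin] at this
  exact Nat.eq_sub_of_add_eq this

theorem sum_pauliSign_mul_ite (a : Fin 4) :
    ∑ b : Fin 4, C (pauliSign a b) * (if b = 0 then 1 else X)
      = if a = 0 then 1 + C 3 * X else 1 - X := by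
  fin_cases a <;> simp [pauliSign, Fin.sum_univ_four] <;> ring

theorem sum_prod_pauliSign_mul_X_pow (α : Fin N → Fin 4) :
    ∑ γ, C (∏ i, pauliSign (α i) (γ i)) * X ^ pauliWeight N γ
      = (1 - X) ^ pauliWeight N α * (1 + C 3 * X) ^ (N - pauliWeight N α) := by
  simp only [X_pow_pauliWeight, map_prod, ← prod_mul_distrib]
  rw [← Fintype.prod_sum fun i b => C (pauliSign (α i) b) * (if b = 0 then 1 else X)]
  simp only [sum_pauliSign_mul_ite, prod_ite, prod_const, card_filter_eq_zero_eq_sub_pauliWeight]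
  exact mul_comm _ _

theorem sum_X_pow_pauliWeight :
    ∑ γ : Fin N → Fin 4, (X : ℤ[X]) ^ pauliWeight N γ = (1 + C 3 * X) ^ N := by
  simpa [pauliSign, pauliWeight] using sum_prod_pauliSign_mul_X_pow (0 : Fin N → Fin 4)

end weightEnumerator

theorem coeff_one_add_C_mul_X_pow {R : Type*} [CommSemiring R] (c : R) (n k : ℕ) :
    ((1 + C c * X) ^ n).coeff k = n.choose k * c ^ k := by
  have h : (1 + C c * X) ^ n = ((1 + X) ^ n).comp (C c * X) := by simp
  rw [h, comp_C_mul_X_coeff, coeff_one_add_X_pow, mul_comm]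

theorem coeff_sub_mul_one_add_C_mul_X_pow (s n q : ℕ) :
    (((1 + C 3 * X) ^ s - (1 - X) ^ s) * (1 + C 3 * X) ^ n : ℤ[X]).coeff q
      = ∑ m ∈ range (q + 1),
          (s.choose m : ℤ) * n.choose (q - m) * 3 ^ (q - m) * (3 ^ m - (-1) ^ m) := by
  have h : (1 - X : ℤ[X]) = 1 + C (-1) * X := by simp [sub_eq_add_neg]
  rw [h, coeff_mul, Nat.sum_antidiagonal_eq_sum_range_succ_mk]
  refine sum_congr rfl fun m _ => ?_
  simp only [coeff_sub, coeff_one_add_C_mul_X_pow]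
  ring

theorem sum_one_sub_prod_pauliSign (N q : ℕ) (α : Fin N → Fin 4) :
    ∑ γ with pauliWeight N γ = q, (1 - ∏ i, pauliSign (α i) (γ i))
      = ∑ m ∈ range (q + 1), ((pauliWeight N α).choose m : ℤ)
          * (N - pauliWeight N α).choose (q - m) * 3 ^ (q - m) * (3 ^ m - (-1) ^ m) := by
  rw [sum_filter_pauliWeight_eq_coeff, ← coeff_sub_mul_one_add_C_mul_X_pow]
  simp only [map_sub, map_one, one_mul, sub_mul, sum_sub_distrib, sum_X_pow_pauliWeight,
    sum_prod_pauliSign_mul_X_pow, ← pow_add, Nat.add_sub_cancel' (pauliWeight_le α)]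

theorem pauliString_eigenvector_of_effective_hamiltonian (N q : ℕ) (α : Fin N → Fin 4) :
    ∑ γ ∈ Finset.univ.filter (fun γ : Fin N → Fin 4 => pauliWeight N γ = q),
        (pauliString N α - pauliString N γ * pauliString N α * pauliString N γ)
      = (∑ m ∈ Finset.range (q + 1),
            ((pauliWeight N α).choose m : ℤ) * ((N - pauliWeight N α).choose (q - m))
              * 3 ^ (q - m) * (3 ^ m - (-1) ^ m)) •
          pauliString N α := by
  rw [← sum_one_sub_prod_pauliSign, sum_smul]
  refine sum_congr rfl fun γ _ => ?_
  rw [pauliString_mul_pauliString_mul_pauliString, Int.cast_smul_eq_zsmul, sub_smul, one_smul]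
end

section
/- For natural numbers N, n and a weight function w : ℕ → ℝ define F N n w = Σ_{s = 0}^{N} (N.choose s) · 3^s · (Σ_{l = 0}^{N} w l · Σ_{j = 0}^{min s l} (−1)^j · 3^{l − j} · (s.choose j) · ((N − s).choose (l − j)))^n. Then F satisfies the recurrence F (N+1) n w = F N n (fun l => w l + 3 · w (l+1)) + 3 · F N n (fun l => w l − w (l+1)), together with the base case F 0 n w = (w 0)^n. -/
/-- `F N n w` is `4^{Nn}` times the replicated partition function `Z_{n,N}` of the
Brownian spin cluster, evaluated on the weights `x_s = w s`. -/
noncomputable def spinClusterF (N n : ℕ) (w : ℕ → ℝ) : ℝ :=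
  ∑ s ∈ Finset.range (N + 1), (N.choose s : ℝ) * 3 ^ s *
    (∑ l ∈ Finset.range (N + 1), w l *
        ∑ j ∈ Finset.range (min s l + 1),
          (-1 : ℝ) ^ j * 3 ^ (l - j) * (s.choose j : ℝ) * ((N - s).choose (l - j) : ℝ)) ^ n

/-! The inner sum over `j` is the coefficient of `X^l` in `(1 - X)^s (1 + 3X)^(N - s)`, so each
bracket is the pairing of `w` with that polynomial. Pascal's rule splits the binomial weight at
`N + 1` into the weights at `N` for `s` and for `s - 1`, which raises the exponent of `1 + 3X`,
respectively of `1 - X`, by one; and multiplying a polynomial by `1 + aX` is dual to replacing `w`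
by `l ↦ w l + a w (l + 1)`. -/

open Polynomial Finset

namespace Polynomial

variable {R : Type*}

section Semiring

variable [Semiring R]

noncomputable def coeffPairing (w : ℕ → R) (p : R[X]) : R :=
  p.sum fun l c => w l * c

theorem coeffPairing_add (w : ℕ → R) (p q : R[X]) :
    coeffPairing w (p + q) = coeffPairing w p + coeffPairing w q :=
  sum_add_index _ _ _ (fun _ => mul_zero _) fun _ _ _ => mul_add _ _ _

theorem coeffPairing_monomial (w : ℕ → R) (l : ℕ) (c : R) :
    coeffPairing w (monomial l c) = w l * c :=
  sum_monomial_index _ _ (mul_zero _)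

theorem coeffPairing_eq_sum_range (w : ℕ → R) {p : R[X]} {N : ℕ} (hp : p.natDegree ≤ N) :
    coeffPairing w p = ∑ l ∈ range (N + 1), w l * p.coeff l :=
  sum_over_range' p (fun _ => mul_zero _) _ (Nat.lt_succ_of_le hp)

end Semiring

section CommSemiring

variable [CommSemiring R]

theorem coeffPairing_mul_one_add_C_mul_X (w : ℕ → R) (a : R) (p : R[X]) :
    coeffPairing w (p * (1 + C a * X)) = coeffPairing (fun l => w l + a * w (l + 1)) p := by
  induction p using Polynomial.induction_on' with
  | add p q hp hq => rw [add_mul, coeffPairing_add, coeffPairing_add, hp, hq]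
  | monomial l c =>
    have : monomial l c * (1 + C a * X) = monomial l c + monomial (l + 1) (c * a) := by
      rw [mul_add, mul_one, ← mul_assoc, X, monomial_mul_C, monomial_mul_monomial, mul_one]
    rw [this, coeffPairing_add, coeffPairing_monomial, coeffPairing_monomial,
      coeffPairing_monomial]
    ring

theorem coeff_one_add_C_mul_X_pow (a : R) (m k : ℕ) :
    ((1 + C a * X) ^ m).coeff k = a ^ k * m.choose k := by
  have hterm (i : ℕ) : (C a * X) ^ i * 1 ^ (m - i) * (m.choose i : R[X])
      = C (a ^ i * m.choose i) * X ^ i := by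
    rw [one_pow, mul_one, mul_pow, ← C_pow, C_mul, C_eq_natCast]; ring
  simp only [add_comm (1 : R[X]), add_pow, hterm, finsetSum_coeff, coeff_C_mul_X_pow,
    sum_ite_eq, mem_range]
  split_ifs with hk
  · rfl
  · rw [Nat.choose_eq_zero_of_lt (by omega), Nat.cast_zero, mul_zero]

theorem coeff_one_add_C_mul_X_pow_mul (a b : R) (s t l : ℕ) :
    ((1 + C a * X) ^ s * (1 + C b * X) ^ t).coeff l
      = ∑ j ∈ range (min s l + 1), a ^ j * b ^ (l - j) * s.choose j * t.choose (l - j) := by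
  rw [coeff_mul, Nat.sum_antidiagonal_eq_sum_range_succ_mk]
  calc _ = ∑ j ∈ range (l + 1), a ^ j * b ^ (l - j) * s.choose j * t.choose (l - j) :=
        sum_congr rfl fun j _ => by
          rw [coeff_one_add_C_mul_X_pow, coeff_one_add_C_mul_X_pow]; ring
    _ = _ := by
      symm
      apply sum_subset (range_subset_range.mpr (Nat.succ_le_succ (min_le_right s l)))
      intro j hjl hjs
      rw [mem_range] at hjl hjs
      rw [Nat.choose_eq_zero_of_lt (by omega : s < j), Nat.cast_zero, mul_zero, zero_mul]

theorem natDegree_one_add_C_mul_X_pow_mul_le (a b : R) (s t : ℕ) :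
    ((1 + C a * X) ^ s * (1 + C b * X) ^ t).natDegree ≤ s + t := by
  compute_degree

end CommSemiring

end Polynomial

noncomputable def spinClusterPoly (s t : ℕ) : ℝ[X] :=
  (1 + C (-1) * X) ^ s * (1 + C 3 * X) ^ t

noncomputable def spinClusterTerm (n : ℕ) (w : ℕ → ℝ) (s t : ℕ) : ℝ :=
  3 ^ s * coeffPairing w (spinClusterPoly s t) ^ n

theorem spinClusterF_eq_sum_choose_mul (N n : ℕ) (w : ℕ → ℝ) :
    spinClusterF N n w
      = ∑ s ∈ range (N + 1), (N.choose s : ℝ) * spinClusterTerm n w s (N - s) := by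
  refine sum_congr rfl fun s hs => ?_
  have hdeg : (spinClusterPoly s (N - s)).natDegree ≤ N := by
    have := natDegree_one_add_C_mul_X_pow_mul_le (-1 : ℝ) 3 s (N - s)
    rw [mem_range] at hs
    unfold spinClusterPoly
    omega
  rw [spinClusterTerm, coeffPairing_eq_sum_range w hdeg]
  simp only [spinClusterPoly, coeff_one_add_C_mul_X_pow_mul, mul_assoc]

theorem spinClusterPoly_succ_left (s t : ℕ) :
    spinClusterPoly (s + 1) t = spinClusterPoly s t * (1 + C (-1) * X) := by
  rw [spinClusterPoly, spinClusterPoly, pow_succ, mul_right_comm]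

theorem spinClusterPoly_succ_right (s t : ℕ) :
    spinClusterPoly s (t + 1) = spinClusterPoly s t * (1 + C 3 * X) := by
  rw [spinClusterPoly, spinClusterPoly, pow_succ, mul_assoc]

theorem spinClusterTerm_succ_left (n : ℕ) (w : ℕ → ℝ) (s t : ℕ) :
    spinClusterTerm n w (s + 1) t = 3 * spinClusterTerm n (fun l => w l - w (l + 1)) s t := by
  simp only [spinClusterTerm, spinClusterPoly_succ_left, coeffPairing_mul_one_add_C_mul_X,
    neg_one_mul, ← sub_eq_add_neg]
  ring

theorem spinClusterTerm_succ_right (n : ℕ) (w : ℕ → ℝ) (s t : ℕ) :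
    spinClusterTerm n w s (t + 1) = spinClusterTerm n (fun l => w l + 3 * w (l + 1)) s t := by
  rw [spinClusterTerm, spinClusterPoly_succ_right, coeffPairing_mul_one_add_C_mul_X,
    spinClusterTerm]

theorem spinClusterF_recurrence (N n : ℕ) (w : ℕ → ℝ) :
    spinClusterF (N + 1) n w
        = spinClusterF N n (fun l => w l + 3 * w (l + 1))
          + 3 * spinClusterF N n (fun l => w l - w (l + 1))
      ∧ spinClusterF 0 n w = (w 0) ^ n := by
  refine ⟨?_, by simp [spinClusterF]⟩
  rw [spinClusterF_eq_sum_choose_mul, spinClusterF_eq_sum_choose_mul,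
    spinClusterF_eq_sum_choose_mul, Finset.sum_choose_succ_mul, mul_sum]
  congr 1 <;> refine sum_congr rfl fun s hs => ?_
  · rw [Nat.succ_sub (mem_range_succ_iff.mp hs), spinClusterTerm_succ_right]
  · rw [spinClusterTerm_succ_left, mul_left_comm]
end

section
/- Let N, d : ℕ and let ψ : Fin N → Matrix (Fin d) (Fin d) ℂ satisfy the Majorana (Clifford) relations: ψ i * ψ j + ψ j * ψ i = 0 for i ≠ j, and ψ i * ψ i = 1 for every i. Let q be an even natural number and let A ⊆ Fin N be a finite set of cardinality s. Then Σ over all B ⊆ Fin N with |B| = q of the matrix (Ψ A − (−1)^{q(q−1)/2} • (Ψ B * Ψ A * Ψ B)) equals (Σ_{m = 0}^{q} (s.choose m) · ((N − s).choose (q − m)) · (1 − (−1)^m)) • Ψ A. In particular every Majorana string Ψ A is an eigenvector of the two-replica effective Hamiltonian of the Brownian SYK model, with eigenvalue E(s) = J Σ_{m} C(s,m) C(N−s, q−m) (1 − (−1)^m) depending only on the length s. -/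
/-!
Moving a Majorana string past another costs one sign per pair of distinct generators, so
`Ψ B * Ψ A = (-1) ^ (|A| |B| + |A ∩ B|) • (Ψ A * Ψ B)`. Together with
`Ψ B * Ψ B = (-1) ^ (q (q - 1) / 2) • 1`, conjugation by `Ψ B` with `|B| = q` even multiplies `Ψ A`
by `(-1) ^ |A ∩ B|`, so each summand is `(1 - (-1) ^ |A ∩ B|) • Ψ A`. Grouping the `B` according
to `m = |A ∩ B|`, each value being attained by `C(s, m) C(N - s, q - m)` sets, gives the
eigenvalue.
-/

/-- The Majorana string associated to a finite set `A`: the ordered product of the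
`ψ i` over `i ∈ A`, taken in increasing order (with `Ψ ∅ = 1`). -/
noncomputable def majoranaString {N d : ℕ} (ψ : Fin N → Matrix (Fin d) (Fin d) ℂ)
    (A : Finset (Fin N)) : Matrix (Fin d) (Fin d) ℂ :=
  ((A.sort (· ≤ ·)).map ψ).prod

open Finset

section Anticommuting

variable {ι R : Type*} [DecidableEq ι] [Ring R] {ψ : ι → R}

theorem mul_prod_map_of_anticomm (hanti : ∀ i j, i ≠ j → ψ i * ψ j + ψ j * ψ i = 0)
    (i : ι) (l : List ι) :
    ψ i * (l.map ψ).prod = (-1 : ℤ) ^ (l.length + l.count i) • ((l.map ψ).prod * ψ i) := by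
  induction l with
  | nil => simp
  | cons j t ih =>
    rw [List.map_cons, List.prod_cons, List.length_cons]
    by_cases hji : j = i
    · subst hji
      rw [List.count_cons_self]
      conv_lhs => rw [ih, mul_smul_comm, ← mul_assoc]
      congr 1
      ring
    · have hij : ψ i * ψ j = -(ψ j * ψ i) := eq_neg_of_add_eq_zero_left (hanti i j (Ne.symm hji))
      rw [List.count_cons_of_ne hji, ← mul_assoc, hij, neg_mul, mul_assoc, ih, mul_smul_comm,
        ← mul_assoc, add_right_comm, pow_succ, mul_neg_one, neg_smul]

theorem prod_map_mul_prod_map_of_anticomm (hanti : ∀ i j, i ≠ j → ψ i * ψ j + ψ j * ψ i = 0)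
    (b a : List ι) :
    (b.map ψ).prod * (a.map ψ).prod
      = (-1 : ℤ) ^ (b.length * a.length + (b.map a.count).sum)
          • ((a.map ψ).prod * (b.map ψ).prod) := by
  induction b with
  | nil => simp
  | cons i t ih =>
    rw [List.map_cons, List.prod_cons, mul_assoc, ih, mul_smul_comm, ← mul_assoc,
      mul_prod_map_of_anticomm hanti, smul_mul_assoc, smul_smul, ← pow_add, mul_assoc]
    congr 2
    simp only [List.length_cons, List.map_cons, List.sum_cons]
    ring

theorem prod_map_mul_self_of_nodup (hanti : ∀ i j, i ≠ j → ψ i * ψ j + ψ j * ψ i = 0)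
    (hsq : ∀ i, ψ i * ψ i = 1) {l : List ι} (hl : l.Nodup) :
    (l.map ψ).prod * (l.map ψ).prod = (-1 : ℤ) ^ (l.length * (l.length - 1) / 2) • 1 := by
  induction l with
  | nil => simp
  | cons i t ih =>
    obtain ⟨hit, ht⟩ := List.nodup_cons.mp hl
    have hcomm : (t.map ψ).prod * ψ i = (-1 : ℤ) ^ t.length • (ψ i * (t.map ψ).prod) := by
      rw [mul_prod_map_of_anticomm hanti, List.count_eq_zero_of_not_mem hit, add_zero, smul_smul,
        ← pow_add, Even.neg_one_pow ⟨_, rfl⟩, one_smul]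
    calc ψ i * (t.map ψ).prod * (ψ i * (t.map ψ).prod)
        = ψ i * ((t.map ψ).prod * ψ i) * (t.map ψ).prod := by simp only [mul_assoc]
      _ = (-1 : ℤ) ^ t.length • ((ψ i * ψ i) * ((t.map ψ).prod * (t.map ψ).prod)) := by
        rw [hcomm, mul_smul_comm, smul_mul_assoc]; simp only [mul_assoc]
      _ = _ := by
        rw [hsq, one_mul, ih ht, smul_smul, ← pow_add, List.length_cons, Nat.triangle_succ,
          add_comm]

end Anticommuting

theorem sum_map_count_sort {ι : Type*} [LinearOrder ι] (A B : Finset ι) :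
    ((B.sort (· ≤ ·)).map (A.sort (· ≤ ·)).count).sum = #(A ∩ B) := by
  rw [((sort_perm_toList B (· ≤ ·)).map _).sum_eq, sum_map_toList, inter_comm,
    ← filter_mem_eq_inter, card_filter]
  refine sum_congr rfl fun i _ => ?_
  simp only [(sort_nodup A _).count, mem_sort]

section MajoranaString

variable {N d : ℕ} {ψ : Fin N → Matrix (Fin d) (Fin d) ℂ}

theorem majoranaString_mul_comm (hanti : ∀ i j, i ≠ j → ψ i * ψ j + ψ j * ψ i = 0)
    (A B : Finset (Fin N)) :
    majoranaString ψ B * majoranaString ψ A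
      = (-1 : ℤ) ^ (#A * #B + #(A ∩ B)) • (majoranaString ψ A * majoranaString ψ B) := by
  rw [majoranaString, majoranaString, prod_map_mul_prod_map_of_anticomm hanti,
    sum_map_count_sort, length_sort, length_sort, mul_comm #B]

theorem majoranaString_mul_self (hanti : ∀ i j, i ≠ j → ψ i * ψ j + ψ j * ψ i = 0)
    (hsq : ∀ i, ψ i * ψ i = 1) (B : Finset (Fin N)) :
    majoranaString ψ B * majoranaString ψ B = (-1 : ℤ) ^ (#B * (#B - 1) / 2) • 1 := by
  rw [majoranaString, prod_map_mul_self_of_nodup hanti hsq (sort_nodup B _), length_sort]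

theorem neg_one_pow_smul_majoranaString_conj
    (hanti : ∀ i j, i ≠ j → ψ i * ψ j + ψ j * ψ i = 0) (hsq : ∀ i, ψ i * ψ i = 1)
    (A B : Finset (Fin N)) :
    (-1 : ℤ) ^ (#B * (#B - 1) / 2) •
        (majoranaString ψ B * majoranaString ψ A * majoranaString ψ B)
      = (-1 : ℤ) ^ (#A * #B + #(A ∩ B)) • majoranaString ψ A := by
  rw [majoranaString_mul_comm hanti, smul_mul_assoc, mul_assoc, majoranaString_mul_self hanti hsq,
    mul_smul_comm, mul_one, smul_smul, smul_smul, mul_right_comm, ← pow_add,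
    Even.neg_one_pow ⟨_, rfl⟩, one_mul]

theorem majoranaString_sub_conj_of_even
    (hanti : ∀ i j, i ≠ j → ψ i * ψ j + ψ j * ψ i = 0) (hsq : ∀ i, ψ i * ψ i = 1)
    {q : ℕ} (hq : Even q) (A B : Finset (Fin N)) (hB : #B = q) :
    majoranaString ψ A - (-1 : ℂ) ^ (q * (q - 1) / 2) •
        (majoranaString ψ B * majoranaString ψ A * majoranaString ψ B)
      = (1 - (-1 : ℤ) ^ #(A ∩ B)) • majoranaString ψ A := by
  have hsign : (((-1 : ℤ) ^ (q * (q - 1) / 2) : ℤ) : ℂ) = (-1 : ℂ) ^ (q * (q - 1) / 2) := by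
    push_cast; rfl
  rw [← hsign, Int.cast_smul_eq_zsmul, ← hB, neg_one_pow_smul_majoranaString_conj hanti hsq, hB,
    pow_add, (hq.mul_left _).neg_one_pow, one_mul, sub_smul, one_smul]

end MajoranaString

section CountingByIntersection

variable {α : Type*} [Fintype α] [DecidableEq α]

theorem card_filter_card_inter_eq (A : Finset α) {q m : ℕ} (hm : m ≤ q) :
    #({B ∈ univ.filter (fun B : Finset α => #B = q) | #(A ∩ B) = m})
      = (#A).choose m * (Fintype.card α - #A).choose (q - m) := by
  rw [← card_compl, ← card_powersetCard, ← card_powersetCard, ← card_product]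
  refine card_nbij' (fun B => (A ∩ B, B \ A)) (fun p => p.1 ∪ p.2) ?_ ?_ ?_ ?_ <;>
    intro B hB <;>
    simp only [mem_coe, mem_filter, mem_univ, true_and, mem_product, mem_powersetCard] at hB ⊢
  · obtain ⟨rfl, rfl⟩ := hB
    have hsplit := card_inter_add_card_sdiff B A
    rw [inter_comm] at hsplit
    exact ⟨⟨inter_subset_left, rfl⟩, by grind [mem_compl], by omega⟩
  · obtain ⟨⟨hA, rfl⟩, hAc, hcard⟩ := hB
    have hdisj : Disjoint B.1 B.2 := disjoint_compl_right.mono hA hAc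
    exact ⟨by rw [card_union_of_disjoint hdisj]; omega,
      by rw [show A ∩ (B.1 ∪ B.2) = B.1 by grind [mem_compl]]⟩
  · grind
  · exact Prod.ext (by grind [mem_compl]) (by grind [mem_compl])

theorem sum_filter_card_eq_comp_card_inter {M : Type*} [AddCommMonoid M] (A : Finset α) (q : ℕ)
    (f : ℕ → M) :
    ∑ B ∈ univ.filter (fun B : Finset α => #B = q), f #(A ∩ B)
      = ∑ m ∈ range (q + 1), ((#A).choose m * (Fintype.card α - #A).choose (q - m)) • f m := by
  have hmaps : ∀ B ∈ univ.filter (fun B : Finset α => #B = q), #(A ∩ B) ∈ range (q + 1) :=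
    fun B hB => mem_range_succ_iff.2 ((mem_filter.1 hB).2 ▸ card_le_card inter_subset_right)
  rw [← sum_fiberwise_of_maps_to hmaps]
  refine sum_congr rfl fun m hm => ?_
  rw [sum_congr rfl fun B hB => congrArg f (mem_filter.1 hB).2, sum_const,
    card_filter_card_inter_eq A (mem_range_succ_iff.1 hm)]

end CountingByIntersection

theorem majoranaString_eigenvector_of_effective_hamiltonian
    (N d : ℕ) (ψ : Fin N → Matrix (Fin d) (Fin d) ℂ)
    (hanti : ∀ i j, i ≠ j → ψ i * ψ j + ψ j * ψ i = 0)
    (hsq : ∀ i, ψ i * ψ i = 1)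
    (q : ℕ) (hq : Even q) (A : Finset (Fin N)) :
    ∑ B ∈ Finset.univ.filter (fun B : Finset (Fin N) => B.card = q),
        (majoranaString ψ A
          - ((-1 : ℂ) ^ (q * (q - 1) / 2)) •
              (majoranaString ψ B * majoranaString ψ A * majoranaString ψ B))
      = (∑ m ∈ Finset.range (q + 1),
            (A.card.choose m : ℤ) * ((N - A.card).choose (q - m) : ℤ)
              * (1 - (-1) ^ m)) •
          majoranaString ψ A := by
  rw [sum_congr rfl fun B hB =>
      majoranaString_sub_conj_of_even hanti hsq hq A B (mem_filter.1 hB).2,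
    ← sum_smul, sum_filter_card_eq_comp_card_inter A q fun m => 1 - (-1 : ℤ) ^ m,
    Fintype.card_fin]
  simp only [nsmul_eq_mul, Nat.cast_mul]
end

section
/- Let d ≥ 1, let ε : Fin d → ℝ be injective, and let c > 0 be a real number. Then the real symmetric matrix K ∈ Matrix (Fin d) (Fin d) ℝ with entries K i j = Real.exp (−c · (ε i − ε j)²) is positive definite. -/
/-!
Writing `exp (-c (εᵢ - εⱼ)²) = exp (-c εᵢ²) · exp (2c εᵢ εⱼ) · exp (-c εⱼ²)`, the matrix is a
congruence of `exp (2c εᵢ εⱼ)` by an invertible diagonal matrix. Expanding the exponential,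
the quadratic form of the latter is `∑ₙ (2c)ⁿ / n! · (∑ᵢ xᵢ εᵢⁿ)²`, a series of nonnegative
terms; for `x ≠ 0` some moment `∑ᵢ xᵢ εᵢⁿ` is nonzero because the nodes `εᵢ` are distinct.
-/

open Finset Function Matrix Polynomial Nat

variable {ι : Type*} [Fintype ι]

theorem sum_mul_eval_eq_zero_of_forall_sum_mul_pow_eq_zero {R : Type*} [CommSemiring R]
    {ε v : ι → R} (h : ∀ n, ∑ i, v i * ε i ^ n = 0) (p : R[X]) :
    ∑ i, v i * p.eval (ε i) = 0 :=
  calc ∑ i, v i * p.eval (ε i)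
      = ∑ n ∈ range (p.natDegree + 1), p.coeff n * ∑ i, v i * ε i ^ n := by
        simp only [eval_eq_sum_range, mul_sum]
        rw [sum_comm]
        simp only [mul_left_comm]
    _ = 0 := by simp [h]

theorem eq_zero_of_forall_sum_mul_pow_eq_zero {K : Type*} [Field K] {ε v : ι → K}
    (hε : Injective ε) (h : ∀ n, ∑ i, v i * ε i ^ n = 0) : v = 0 := by
  classical
  funext j
  have hbasis := sum_mul_eval_eq_zero_of_forall_sum_mul_pow_eq_zero h (Lagrange.basis univ ε j)
  rwa [Fintype.sum_eq_single j fun i hij => by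
      rw [Lagrange.eval_basis_of_ne (Ne.symm hij) (mem_univ i), mul_zero],
    Lagrange.eval_basis_self hε.injOn (mem_univ j), mul_one] at hbasis

theorem hasSum_dotProduct_mulVec_exp_mul_mul (a : ℝ) (ε x : ι → ℝ) :
    HasSum (fun n => a ^ n / n ! * (∑ i, x i * ε i ^ n) ^ 2)
      (x ⬝ᵥ (of (fun i j => Real.exp (a * ε i * ε j)) *ᵥ x)) := by
  have hentry (i j : ι) : HasSum (fun n => x i * x j * ((a * ε i * ε j) ^ n / n !))
      (x i * x j * Real.exp (a * ε i * ε j)) := by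
    rw [Real.exp_eq_exp_ℝ]
    exact (NormedSpace.expSeries_div_hasSum_exp (a * ε i * ε j)).mul_left (x i * x j)
  have hterm : (fun n : ℕ => a ^ n / n ! * (∑ i, x i * ε i ^ n) ^ 2)
      = fun n => ∑ i, ∑ j, x i * x j * ((a * ε i * ε j) ^ n / n !) := by
    funext n
    rw [sq, sum_mul_sum, mul_sum]
    refine sum_congr rfl fun i _ => ?_
    rw [mul_sum]
    exact sum_congr rfl fun j _ => by ring
  have hvalue : x ⬝ᵥ (of (fun i j => Real.exp (a * ε i * ε j)) *ᵥ x)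
      = ∑ i, ∑ j, x i * x j * Real.exp (a * ε i * ε j) := by
    simp only [dotProduct, mulVec, of_apply, mul_sum]
    exact sum_congr rfl fun i _ => sum_congr rfl fun j _ => by ring
  rw [hterm, hvalue]
  exact hasSum_sum fun i _ => hasSum_sum fun j _ => hentry i j

theorem posDef_exp_mul_mul {a : ℝ} (ha : 0 < a) {ε : ι → ℝ} (hε : Injective ε) :
    (of fun i j => Real.exp (a * ε i * ε j)).PosDef := by
  refine .of_dotProduct_mulVec_pos ?_ fun x hx => ?_
  · ext i j
    simp only [conjTranspose_apply, of_apply, star_trivial]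
    ring_nf
  · obtain ⟨n, hn⟩ : ∃ n, ∑ i, x i * ε i ^ n ≠ 0 := by
      by_contra! h
      exact hx (eq_zero_of_forall_sum_mul_pow_eq_zero hε h)
    rw [star_trivial]
    exact hasSum_lt (f := 0) (fun m => by positivity) (by positivity) hasSum_zero
      (hasSum_dotProduct_mulVec_exp_mul_mul a ε x)

theorem gaussian_kernel_posDef_general (d : ℕ) (ε : Fin d → ℝ)
    (hε : Function.Injective ε) (c : ℝ) (hc : 0 < c) :
    (Matrix.of fun i j : Fin d => Real.exp (-c * (ε i - ε j) ^ 2)).PosDef := by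
  set D : Matrix (Fin d) (Fin d) ℝ := diagonal fun i => Real.exp (-c * ε i ^ 2)
  have hD : IsUnit D :=
    isUnit_diagonal.2 (Pi.isUnit_iff.2 fun i => (Real.exp_pos _).ne'.isUnit)
  have hfactor : of (fun i j => Real.exp (-c * (ε i - ε j) ^ 2))
      = D * of (fun i j => Real.exp (2 * c * ε i * ε j)) * star D := by
    ext i j
    simp only [D, star_eq_conjTranspose, diagonal_conjTranspose, diagonal_mul, mul_diagonal,
      of_apply, star_trivial, ← Real.exp_add]
    ring_nf
  rw [hfactor, hD.posDef_star_right_conjugate_iff]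
  exact posDef_exp_mul_mul (by positivity) hε

theorem gaussian_kernel_posDef (d : ℕ) (hd : 1 ≤ d) (ε : Fin d → ℝ)
    (hε : Function.Injective ε) (c : ℝ) (hc : 0 < c) :
    (Matrix.of fun i j : Fin d => Real.exp (-c * (ε i - ε j) ^ 2)).PosDef :=
  gaussian_kernel_posDef_general d ε hε c hc
end

section
/- Let a, x : ℂ with Complex.sin (a/2) ≠ 0 (equivalently, a is not an integer multiple of 2π, so that a + 2πk ≠ 0 for every integer k). Then the symmetric partial products of the bilateral infinite product converge: Tendsto (fun K : ℕ => ∏_{k ∈ Finset.Icc (−(K:ℤ)) (K:ℤ)} (1 − x / (a + 2·π·k))) atTop (nhds (Complex.sin ((a − x)/2) / Complex.sin (a/2))). -/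
/-!
With `α = a / 2π` and `β = (a - x) / 2π`, the `k`-th factor is `(β + k) / (α + k)`. Pairing `k`
with `-k`, the symmetric partial products of numerator and denominator are
`z ∏_{j ≤ K} (z² - j²)` for `z = β, α`; after dividing out the common `∏ (-j²)` these become Euler's
partial products `π z ∏_{j ≤ K} (1 - z² / j²) → sin (π z)`, and `sin (π α) = sin (a / 2) ≠ 0`.
-/

open Filter Finset Real

lemma Finset.prod_Icc_neg_natCast {M : Type*} [CommMonoid M] (f : ℤ → M) (K : ℕ) :
    ∏ k ∈ Icc (-(K : ℤ)) K, f k = f 0 * ∏ j ∈ range K, (f (j + 1) * f (-(j + 1))) := by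
  induction K with
  | zero => simp
  | succ n ih =>
    have hIcc : Icc (-((n + 1 : ℕ) : ℤ)) (n + 1 : ℕ) =
        insert ((n : ℤ) + 1) (insert (-((n : ℤ) + 1)) (Icc (-(n : ℤ)) n)) := by
      ext k; simp only [mem_Icc, mem_insert]; omega
    rw [hIcc, prod_insert (by simp; omega), prod_insert (by simp), ih, prod_range_succ]
    ac_rfl

lemma prod_Icc_add_intCast_eq {R : Type*} [CommRing R] (z : R) (K : ℕ) :
    ∏ k ∈ Icc (-(K : ℤ)) K, (z + k) = z * ∏ j ∈ range K, (z ^ 2 - ((j : R) + 1) ^ 2) := by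
  rw [Finset.prod_Icc_neg_natCast]
  push_cast
  simp only [add_zero]
  congr 1
  exact prod_congr rfl fun j _ => by ring

lemma sq_sub_sq_eq_neg_sq_mul {K : Type*} [Field K] (z : K) {m : K} (hm : m ≠ 0) :
    z ^ 2 - m ^ 2 = -m ^ 2 * (1 - z ^ 2 / m ^ 2) := by
  field_simp
  ring

lemma prod_Icc_add_intCast_div_eq (α β : ℂ) (K : ℕ) :
    ∏ k ∈ Icc (-(K : ℤ)) K, ((β + k) / (α + k)) =
      (π * β * ∏ j ∈ range K, (1 - β ^ 2 / ((j : ℂ) + 1) ^ 2)) /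
        (π * α * ∏ j ∈ range K, (1 - α ^ 2 / ((j : ℂ) + 1) ^ 2)) := by
  have hsq (z : ℂ) : ∏ j ∈ range K, (z ^ 2 - ((j : ℂ) + 1) ^ 2) =
      (∏ j ∈ range K, -((j : ℂ) + 1) ^ 2) * ∏ j ∈ range K, (1 - z ^ 2 / ((j : ℂ) + 1) ^ 2) := by
    rw [← prod_mul_distrib]
    exact prod_congr rfl fun j _ => sq_sub_sq_eq_neg_sq_mul z (Nat.cast_add_one_ne_zero j)
  have hC : ∏ j ∈ range K, -((j : ℂ) + 1) ^ 2 ≠ 0 :=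
    prod_ne_zero_iff.2 fun j _ => neg_ne_zero.2 (pow_ne_zero 2 (Nat.cast_add_one_ne_zero j))
  have hπ : (π : ℂ) ≠ 0 := Complex.ofReal_ne_zero.2 pi_ne_zero
  rw [prod_div_distrib, prod_Icc_add_intCast_eq, prod_Icc_add_intCast_eq, hsq, hsq,
    mul_left_comm β, mul_left_comm α, mul_div_mul_left _ _ hC, mul_assoc, mul_assoc,
    mul_div_mul_left _ _ hπ]

lemma one_sub_div_add_mul_eq {F : Type*} [Field F] {a c t : F} (x : F) (hc : c ≠ 0)
    (h : a + c * t ≠ 0) : 1 - x / (a + c * t) = ((a - x) / c + t) / (a / c + t) := by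
  have h' : a / c + t ≠ 0 := by
    rwa [div_add' _ _ _ hc, div_ne_zero_iff, mul_comm t, and_iff_left hc]
  field_simp
  ring

theorem bilateral_product_sin (a x : ℂ) (ha : Complex.sin (a / 2) ≠ 0) :
    Tendsto
      (fun K : ℕ => ∏ k ∈ Finset.Icc (-(K : ℤ)) (K : ℤ),
        (1 - x / (a + 2 * (Real.pi : ℂ) * (k : ℂ))))
      atTop (nhds (Complex.sin ((a - x) / 2) / Complex.sin (a / 2))) := by
  have h2π : (2 * π : ℂ) ≠ 0 := mul_ne_zero two_ne_zero (Complex.ofReal_ne_zero.2 pi_ne_zero)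
  have hπ_mul (z : ℂ) : π * (z / (2 * π)) = z / 2 := by field_simp
  have hpole (k : ℤ) : a + 2 * π * k ≠ 0 := by
    refine fun h => ha (Complex.sin_eq_zero_iff.2 ⟨-k, ?_⟩)
    rw [eq_neg_of_add_eq_zero_left h]
    push_cast
    ring
  rw [← hπ_mul (a - x), ← hπ_mul a]
  rw [← hπ_mul a] at ha
  have hlim := (Complex.tendsto_euler_sin_prod ((a - x) / (2 * π))).div
    (Complex.tendsto_euler_sin_prod (a / (2 * π))) ha
  refine hlim.congr fun K => ?_
  rw [Pi.div_apply, ← prod_Icc_add_intCast_div_eq]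
  exact prod_congr rfl fun k _ => (one_sub_div_add_mul_eq x h2π (hpole k)).symm
end

section
/- Let σ1 = !![0,1;1,0], σ2 = !![0,−Complex.I; Complex.I,0], σ3 = !![1,0;0,−1] be the Pauli matrices in Matrix (Fin 2) (Fin 2) ℂ, and for v : Fin m → Fin 3 let Π v denote the ordered product σ_{v 0} * σ_{v 1} * ⋯ * σ_{v (m−1)} (with indices v i ∈ {0,1,2} labelling σ1, σ2, σ3). Then for every natural number m, 4 · card {v : Fin m → Fin 3 | ∃ c : ℂ, Π v = c • (1 : Matrix (Fin 2) (Fin 2) ℂ)} = 3^m + 3·(−1)^m (as integers). -/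
/-!
Modulo nonzero scalars the Pauli matrices generate a copy of `(ZMod 2)²`, with
`σ₁ ↦ (1, 0)`, `σ₂ ↦ (1, 1)`, `σ₃ ↦ (0, 1)`, and only the class `0` consists of scalar matrices.
So a word is proportional to the identity iff its labels sum to zero. The three labels are
exactly the nonzero elements of `(ZMod 2)²`, so a word of length `m + 1` sums to zero iff its
last `m` letters have nonzero sum, the first letter then being forced. Hence the number `a m`
of such words of length `m` satisfies `a (m + 1) + a m = 3 ^ m`, with `a 0 = 1`.
-/

/-- The three non-identity Pauli matrices. -/
noncomputable def pauliNI : Fin 3 → Matrix (Fin 2) (Fin 2) ℂ :=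
  ![!![0, 1; 1, 0], !![0, -Complex.I; Complex.I, 0], !![1, 0; 0, -1]]

open Finset

section ZeroSum

variable {α G : Type*} [Fintype α] [AddCommGroup G] [DecidableEq G]

def zeroSumCount (f : α → G) (m : ℕ) : ℕ := #{v : Fin m → α | ∑ i, f (v i) = 0}

variable {f : α → G} (hf : Function.Injective f) (hrange : Set.range f = {0}ᶜ)
include hf hrange

lemma card_fiber_of_range_eq_compl_zero (g : G) :
    #{x | f x = g} = if g = 0 then 0 else 1 := by
  split_ifs with hg
  · have : ∀ x, f x ≠ 0 := fun x =>
      Set.mem_compl_singleton_iff.mp (hrange ▸ Set.mem_range_self x)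
    simp [hg, this]
  · obtain ⟨x₀, rfl⟩ : g ∈ Set.range f := by simpa [hrange] using hg
    exact card_eq_one.mpr ⟨x₀, by ext; simp [hf.eq_iff]⟩

lemma zeroSumCount_succ_add (m : ℕ) :
    zeroSumCount f (m + 1) + zeroSumCount f m = Fintype.card α ^ m := by
  have hsucc : zeroSumCount f (m + 1) = #{w : Fin m → α | ∑ i, f (w i) ≠ 0} := by
    simp only [zeroSumCount, card_filter]
    rw [← (Fin.consEquiv fun _ => α).sum_comp, Fintype.sum_prod_type, sum_comm]
    refine sum_congr rfl fun w _ => ?_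
    simp only [Fin.consEquiv_apply, Fin.sum_univ_succ, Fin.cons_zero, Fin.cons_succ,
      add_eq_zero_iff_eq_neg]
    rw [← card_filter, card_fiber_of_range_eq_compl_zero hf hrange]
    simp only [neg_eq_zero, ite_not]
  rw [hsucc, zeroSumCount, add_comm, card_filter_add_card_filter_not, card_univ,
    Fintype.card_fun, Fintype.card_fin]

lemma card_add_one_mul_zeroSumCount (m : ℕ) :
    ((Fintype.card α : ℤ) + 1) * zeroSumCount f m
      = Fintype.card α ^ m + Fintype.card α * (-1) ^ m := by
  induction m with
  | zero => simp [zeroSumCount, add_comm]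
  | succ m ih =>
    have hrec : (zeroSumCount f (m + 1) : ℤ) = Fintype.card α ^ m - zeroSumCount f m := by
      rw [eq_sub_iff_add_eq]
      exact_mod_cast zeroSumCount_succ_add hf hrange m
    rw [hrec]
    linear_combination (-1 : ℤ) * ih

end ZeroSum

namespace Pauli

def label : Fin 3 → ZMod 2 × ZMod 2 := ![(1, 0), (1, 1), (0, 1)]

lemma label_injective : Function.Injective label := by decide

lemma range_label : Set.range label = {0}ᶜ := by
  ext s
  simp only [Set.mem_range, Set.mem_compl_singleton_iff]
  revert s
  decide

noncomputable def ofLabel (s : ZMod 2 × ZMod 2) : Matrix (Fin 2) (Fin 2) ℂ :=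
  (if s.1 = 0 then 1 else pauliNI 0) * (if s.2 = 0 then 1 else pauliNI 2)

lemma exists_ofLabel_eq_smul_one_iff (s : ZMod 2 × ZMod 2) :
    (∃ c : ℂ, ofLabel s = c • 1) ↔ s = 0 := by
  obtain ⟨a, b⟩ := s
  fin_cases a <;> fin_cases b <;>
    simp +decide [ofLabel, pauliNI, Matrix.one_fin_two, CharZero.neg_eq_self_iff]

lemma exists_pauliNI_mul_ofLabel (x : Fin 3) (s : ZMod 2 × ZMod 2) :
    ∃ c : ℂ, c ≠ 0 ∧ pauliNI x * ofLabel s = c • ofLabel (label x + s) := by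
  obtain ⟨a, b⟩ := s
  fin_cases x <;> fin_cases a <;> fin_cases b <;>
    simp +decide [ofLabel, pauliNI, Matrix.one_fin_two]

lemma exists_prod_eq_smul_ofLabel {m : ℕ} (v : Fin m → Fin 3) :
    ∃ c : ℂ, c ≠ 0 ∧
      (List.ofFn fun i => pauliNI (v i)).prod = c • ofLabel (∑ i, label (v i)) := by
  induction m with
  | zero => exact ⟨1, one_ne_zero, by simp [ofLabel]⟩
  | succ m ih =>
    obtain ⟨c, hc, htail⟩ := ih fun i : Fin m => v i.succ
    obtain ⟨d, hd, hhead⟩ := exists_pauliNI_mul_ofLabel (v 0) (∑ i : Fin m, label (v i.succ))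
    refine ⟨c * d, mul_ne_zero hc hd, ?_⟩
    rw [List.ofFn_succ, List.prod_cons, Fin.sum_univ_succ, htail, mul_smul_comm, hhead,
      smul_smul]

lemma exists_prod_eq_smul_one_iff {m : ℕ} (v : Fin m → Fin 3) :
    (∃ c : ℂ, (List.ofFn fun i => pauliNI (v i)).prod = c • 1) ↔ ∑ i, label (v i) = 0 := by
  obtain ⟨c, hc, hprod⟩ := exists_prod_eq_smul_ofLabel v
  rw [hprod, ← exists_ofLabel_eq_smul_one_iff]
  constructor
  · rintro ⟨d, hd⟩
    exact ⟨c⁻¹ * d, by rw [mul_smul, ← hd, smul_smul, inv_mul_cancel₀ hc, one_smul]⟩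
  · rintro ⟨d, hd⟩
    exact ⟨c * d, by rw [hd, smul_smul]⟩

end Pauli

theorem count_pauli_words_proportional_to_id (m : ℕ) :
    (4 : ℤ) *
        ({v : Fin m → Fin 3 |
            ∃ c : ℂ, (List.ofFn fun i => pauliNI (v i)).prod
              = c • (1 : Matrix (Fin 2) (Fin 2) ℂ)}.ncard : ℤ)
      = 3 ^ m + 3 * (-1) ^ m := by
  have hset : {v : Fin m → Fin 3 |
      ∃ c : ℂ, (List.ofFn fun i => pauliNI (v i)).prod = c • (1 : Matrix (Fin 2) (Fin 2) ℂ)}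
        = ↑({v | ∑ i, Pauli.label (v i) = 0} : Finset (Fin m → Fin 3)) := by
    ext v
    simpa using Pauli.exists_prod_eq_smul_one_iff v
  rw [hset, Set.ncard_coe_finset]
  simpa [zeroSumCount] using card_add_one_mul_zeroSumCount Pauli.label_injective Pauli.range_label m
end

section
/- Let n ≥ 1 and d ≥ 1 be natural numbers, ε : Fin d → ℝ, and v > 0 a real number. Let μ be the product measure on Fin n → ℝ whose factors are each the Gaussian measure on ℝ with mean 0 and variance v. Then ∫ (t : Fin n → ℝ), ∏_{k : Fin n} ((1/d) · Σ_{i : Fin d} Complex.exp (Complex.I · (t k − t (k + 1)) · (ε i))) ∂μ = (1 / d^n) · (Matrix.trace (K ^ n) : ℂ), where the index k + 1 is taken cyclically in Fin n, and K ∈ Matrix (Fin d) (Fin d) ℂ has real entries K i j = Real.exp (−(v/2) · (ε i − ε j)²). -/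
/-!
Expanding the product of the `n` averages turns the integrand into `d⁻ⁿ` times a sum over
colourings `p : Fin n → Fin d` of `exp (i ∑ₖ (tₖ - tₖ₊₁) ε (p k))`. Summation by parts rewrites
the exponent as `∑ₖ tₖ (ε (p k) - ε (p (k - 1)))`, so the independent Gaussian coordinates
factor and each contributes its characteristic function `exp (-v c² / 2)`. What remains is
`∏ₖ K (p k) (p (k + 1))`, the weight of a closed walk of length `n`, and these weights sum to
`tr Kⁿ`.
-/

open MeasureTheory ProbabilityTheory Complex
open scoped NNReal

namespace Matrix

variable {ι R : Type*} [Fintype ι] [DecidableEq ι] [CommSemiring R]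

theorem pow_succ_apply_eq_sum_prod (A : Matrix ι ι R) (m : ℕ) (i j : ι) :
    (A ^ (m + 1)) i j =
      ∑ p : Fin m → ι, ∏ k : Fin (m + 1),
        A ((Fin.cons i p : Fin (m + 1) → ι) k) ((Fin.snoc p j : Fin (m + 1) → ι) k) := by
  induction m generalizing i with
  | zero => simp [Fin.snoc]
  | succ m ih =>
    rw [pow_succ', mul_apply, ← (Fin.consEquiv fun _ => ι).sum_comp, Fintype.sum_prod_type]
    simp_rw [ih, Finset.mul_sum]
    refine Finset.sum_congr rfl fun x _ => Finset.sum_congr rfl fun p _ => ?_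
    rw [Fin.prod_univ_succ (n := m + 1)]
    simp only [Fin.consEquiv, Equiv.coe_fn_mk, ← Fin.cons_snoc_eq_snoc_cons, Fin.cons_zero,
      Fin.cons_succ]

theorem trace_pow_eq_sum_prod_finRotate (A : Matrix ι ι R) {n : ℕ} (hn : n ≠ 0) :
    trace (A ^ n) = ∑ p : Fin n → ι, ∏ k, A (p k) (p (finRotate n k)) := by
  obtain ⟨m, rfl⟩ := Nat.exists_eq_succ_of_ne_zero hn
  have hrot (i : ι) (p : Fin m → ι) (k : Fin (m + 1)) :
      (Fin.snoc p i : Fin (m + 1) → ι) k = (Fin.cons i p : Fin (m + 1) → ι) (finRotate _ k) :=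
    congrFun (Fin.snoc_eq_cons_rotate p i) k
  rw [← (Fin.consEquiv fun _ => ι).sum_comp, Fintype.sum_prod_type]
  simp only [trace, diag, pow_succ_apply_eq_sum_prod, hrot, Fin.consEquiv, Equiv.coe_fn_mk]

end Matrix

theorem Equiv.Perm.sum_sub_comp_mul_eq {ι R : Type*} [Fintype ι] [CommRing R]
    (σ : Equiv.Perm ι) (t a : ι → R) :
    ∑ k, (t k - t (σ k)) * a k = ∑ k, t k * (a k - a (σ.symm k)) := by
  simp only [sub_mul, mul_sub, Finset.sum_sub_distrib]
  rw [← Equiv.sum_comp σ fun k => t k * a (σ.symm k)]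
  simp

theorem integral_cexp_I_mul_gaussianReal (v : ℝ≥0) (c : ℝ) :
    ∫ x, cexp (I * x * c) ∂gaussianReal 0 v = cexp (-(v / 2) * c ^ 2) := by
  have h := charFun_gaussianReal (μ := 0) (v := v) c
  rw [charFun_apply_real] at h
  convert h using 3
  · congr 1; ring
  · simp only [ofReal_zero, mul_zero, zero_mul, zero_sub]
    ring

variable {ι : Type*} [Fintype ι]

theorem integrable_prod_cexp_I_mul_sub_perm (μ : Measure (ι → ℝ)) [IsFiniteMeasure μ]
    (σ : Equiv.Perm ι) (a : ι → ℝ) :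
    Integrable (fun t : ι → ℝ => ∏ k, cexp (I * (t k - t (σ k)) * a k)) μ := by
  refine .of_bound (by fun_prop) 1 (ae_of_all _ fun t => ?_)
  simp [norm_prod, Complex.norm_exp]

theorem integral_prod_cexp_I_mul_sub_perm_gaussianReal (σ : Equiv.Perm ι) (v : ℝ≥0)
    (a : ι → ℝ) :
    ∫ t : ι → ℝ, ∏ k, cexp (I * (t k - t (σ k)) * a k) ∂(Measure.pi fun _ => gaussianReal 0 v)
      = ∏ k, cexp (-(v / 2) * (a k - a (σ k)) ^ 2) := by
  have hfactor : ∀ t : ι → ℝ, ∏ k, cexp (I * (t k - t (σ k)) * a k)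
      = ∏ k, cexp (I * t k * ↑(a k - a (σ.symm k))) := by
    intro t
    simp_rw [← Complex.exp_sum, mul_assoc, ← Finset.mul_sum]
    push_cast
    rw [σ.sum_sub_comp_mul_eq]
  simp_rw [hfactor]
  rw [integral_fintype_prod_eq_prod (fun k (x : ℝ) => cexp (I * x * ↑(a k - a (σ.symm k))))]
  simp_rw [integral_cexp_I_mul_gaussianReal]
  rw [← Equiv.prod_comp σ]
  simp only [Equiv.symm_apply_apply]
  congr! 3
  push_cast
  ring

theorem gaussian_cyclic_moment_eq_trace_pow_general (n d : ℕ) (hn : 1 ≤ n)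
    (ε : Fin d → ℝ) (v : ℝ) (hv : 0 < v) :
    (∫ t : Fin n → ℝ,
        ∏ k : Fin n,
          ((1 / (d : ℂ)) * ∑ i : Fin d,
            Complex.exp (Complex.I * ((t k : ℂ) - (t (finRotate n k) : ℂ)) * (ε i : ℂ)))
        ∂(Measure.pi fun _ : Fin n => gaussianReal 0 v.toNNReal))
      = (1 / (d : ℂ) ^ n) *
          Matrix.trace
            ((Matrix.of fun i j : Fin d =>
                (Real.exp (-(v / 2) * (ε i - ε j) ^ 2) : ℂ)) ^ n) := by
  have hexpand (t : Fin n → ℝ) :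
      ∏ k, (1 / (d : ℂ) * ∑ i, cexp (I * (t k - t (finRotate n k)) * ε i))
        = (1 / d) ^ n *
          ∑ p : Fin n → Fin d, ∏ k, cexp (I * (t k - t (finRotate n k)) * ε (p k)) := by
    rw [Finset.prod_mul_distrib, Finset.prod_const, Finset.card_univ, Fintype.card_fin,
      Finset.prod_univ_sum, Fintype.piFinset_univ]
  simp_rw [hexpand]
  rw [integral_const_mul, integral_finsetSum _ fun p _ => integrable_prod_cexp_I_mul_sub_perm _ _ _,
    Matrix.trace_pow_eq_sum_prod_finRotate _ (by omega), one_div_pow]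
  simp_rw [integral_prod_cexp_I_mul_sub_perm_gaussianReal, Real.coe_toNNReal v hv.le,
    Matrix.of_apply]
  push_cast
  rfl

theorem gaussian_cyclic_moment_eq_trace_pow (n d : ℕ) (hn : 1 ≤ n) (hd : 1 ≤ d)
    (ε : Fin d → ℝ) (v : ℝ) (hv : 0 < v) :
    (∫ t : Fin n → ℝ,
        ∏ k : Fin n,
          ((1 / (d : ℂ)) * ∑ i : Fin d,
            Complex.exp (Complex.I * ((t k : ℂ) - (t (finRotate n k) : ℂ)) * (ε i : ℂ)))
        ∂(Measure.pi fun _ : Fin n => gaussianReal 0 v.toNNReal))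
      = (1 / (d : ℂ) ^ n) *
          Matrix.trace
            ((Matrix.of fun i j : Fin d =>
                (Real.exp (-(v / 2) * (ε i - ε j) ^ 2) : ℂ)) ^ n) :=
  gaussian_cyclic_moment_eq_trace_pow_general n d hn ε v hv
end
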